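/- arXiv:1711.01612 — 2 statements merged into one kernel-verified Lean document; each statement's English description precedes it below -/
import Mathlib

section
/- The weighted shift T on ℓ² defined by Te₁ = 0 and Teₙ = (1/(n-1)) e_{n-1} for n ≥ 2 is minimum attaining, but its adjoint T* (which satisfies T*eₙ = (1/n) e_{n+1}) has m(T*) = 0 and is not minimum attaining. -/
open ContinuousLinearMap Filter Topology

noncomputable def mmod {H1 H2 : Type*} [NormedAddCommGroup H1] [InnerProductSpace ℂ H1]
    [NormedAddCommGroup H2] [InnerProductSpace ℂ H2] (T : H1 →L[ℂ] H2) : ℝ :=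
  sInf ((fun x => ‖T x‖) '' {x : H1 | ‖x‖ = 1})

def MinAttains {H1 H2 : Type*} [NormedAddCommGroup H1] [InnerProductSpace ℂ H1]
    [NormedAddCommGroup H2] [InnerProductSpace ℂ H2] (T : H1 →L[ℂ] H2) : Prop :=
  ∃ x : H1, ‖x‖ = 1 ∧ ‖T x‖ = mmod T

noncomputable def mmodOn {H1 H2 : Type*} [NormedAddCommGroup H1] [InnerProductSpace ℂ H1]
    [NormedAddCommGroup H2] [InnerProductSpace ℂ H2] (T : H1 →L[ℂ] H2)
    (M : Submodule ℂ H1) : ℝ :=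
  sInf ((fun x => ‖T x‖) '' {x : H1 | x ∈ M ∧ ‖x‖ = 1})

def MinAttainsOn {H1 H2 : Type*} [NormedAddCommGroup H1] [InnerProductSpace ℂ H1]
    [NormedAddCommGroup H2] [InnerProductSpace ℂ H2] (T : H1 →L[ℂ] H2)
    (M : Submodule ℂ H1) : Prop :=
  ∃ x : H1, x ∈ M ∧ ‖x‖ = 1 ∧ ‖T x‖ = mmodOn T M

def AbsMinAttains {H1 H2 : Type*} [NormedAddCommGroup H1] [InnerProductSpace ℂ H1]
    [NormedAddCommGroup H2] [InnerProductSpace ℂ H2] (T : H1 →L[ℂ] H2) : Prop :=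
  ∀ M : Submodule ℂ H1, M ≠ ⊥ → IsClosed (M : Set H1) → MinAttainsOn T M

/-! `T` kills `e₀`, so `m(T) = 0` is attained. The adjoint is the forward shift with conjugate
weights, read off coordinatewise from `(T* x)ₘ = ⟪T eₘ, x⟫`: the weights `1/(n+1)` tend to `0`, so
`m(T*) = 0`, while nonzero weights make `T*` injective, so no unit vector attains `0`. -/

section MinimumModulus

variable {H1 H2 : Type*} [NormedAddCommGroup H1] [InnerProductSpace ℂ H1]
  [NormedAddCommGroup H2] [InnerProductSpace ℂ H2]

theorem mmod_nonneg (T : H1 →L[ℂ] H2) : 0 ≤ mmod T :=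
  Real.sInf_nonneg fun _ ⟨_, _, hy⟩ => hy ▸ norm_nonneg _

theorem mmod_le_norm_apply (T : H1 →L[ℂ] H2) {x : H1} (hx : ‖x‖ = 1) :
    mmod T ≤ ‖T x‖ :=
  csInf_le ⟨0, fun _ ⟨_, _, hy⟩ => hy ▸ norm_nonneg _⟩ ⟨x, hx, rfl⟩

theorem minAttains_of_apply_eq_zero (T : H1 →L[ℂ] H2) {x : H1} (hx : ‖x‖ = 1)
    (hTx : T x = 0) : MinAttains T := by
  have hle := mmod_le_norm_apply T hx
  rw [hTx, norm_zero] at hle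
  exact ⟨x, hx, by rw [hTx, norm_zero, le_antisymm hle (mmod_nonneg T)]⟩

theorem mmod_eq_zero_of_tendsto (T : H1 →L[ℂ] H2) {u : ℕ → H1} (hu : ∀ n, ‖u n‖ = 1)
    (hTu : Tendsto (fun n => ‖T (u n)‖) atTop (𝓝 0)) : mmod T = 0 :=
  le_antisymm (ge_of_tendsto' hTu fun n => mmod_le_norm_apply T (hu n)) (mmod_nonneg T)

theorem not_minAttains_of_injective (T : H1 →L[ℂ] H2) (hT : Function.Injective T)
    (hm : mmod T = 0) : ¬ MinAttains T := by
  rintro ⟨x, hx, hTx⟩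
  rw [hm, norm_eq_zero, ← map_zero T] at hTx
  rw [hT hTx, norm_zero] at hx
  exact zero_ne_one hx

end MinimumModulus

local notation "ℓ²" => lp (fun _ : ℕ => ℂ) 2

theorem adjoint_apply_coord_eq_inner (T : ℓ² →L[ℂ] ℓ²) (x : ℓ²) (m : ℕ) :
    adjoint T x m = inner ℂ (T (lp.single 2 m 1)) x := by
  rw [← adjoint_inner_right, lp.inner_single_left]
  simp

namespace WeightedShift

open ComplexConjugate

variable {T : ℓ² →L[ℂ] ℓ²} {w : ℕ → ℂ}

theorem adjoint_apply_coord_zero (h0 : T (lp.single 2 0 1) = 0) (x : ℓ²) :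
    adjoint T x 0 = 0 := by
  rw [adjoint_apply_coord_eq_inner, h0, inner_zero_left]

theorem adjoint_apply_coord_succ (hsucc : ∀ n, T (lp.single 2 (n + 1) 1) = w n • lp.single 2 n 1)
    (x : ℓ²) (k : ℕ) : adjoint T x (k + 1) = conj (w k) * x k := by
  rw [adjoint_apply_coord_eq_inner, hsucc, inner_smul_left, lp.inner_single_left]
  simp

theorem adjoint_apply_single (h0 : T (lp.single 2 0 1) = 0)
    (hsucc : ∀ n, T (lp.single 2 (n + 1) 1) = w n • lp.single 2 n 1) (n : ℕ) :
    adjoint T (lp.single 2 n 1) = conj (w n) • lp.single 2 (n + 1) 1 := by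
  ext m
  cases m with
  | zero => simp [adjoint_apply_coord_zero h0]
  | succ k =>
    rw [adjoint_apply_coord_succ hsucc]
    rcases eq_or_ne k n with rfl | hkn
    · simp
    · simp [hkn]

theorem adjoint_injective
    (hsucc : ∀ n, T (lp.single 2 (n + 1) 1) = w n • lp.single 2 n 1) (hw : ∀ n, w n ≠ 0) :
    Function.Injective (adjoint T) := by
  refine (injective_iff_map_eq_zero _).2 fun x hx => lp.ext (funext fun k => ?_)
  have hk := adjoint_apply_coord_succ hsucc x k
  rw [hx] at hk
  exact ((mul_eq_zero.1 hk.symm).resolve_left ((map_ne_zero _).2 (hw k)))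

end WeightedShift

theorem stmt5
    (T : lp (fun _ : ℕ => ℂ) 2 →L[ℂ] lp (fun _ : ℕ => ℂ) 2)
    (e : ℕ → lp (fun _ : ℕ => ℂ) 2)
    (he : ∀ n, e n = lp.single 2 n (1 : ℂ))
    (hT0 : T (e 0) = 0)
    (hTn : ∀ n : ℕ, T (e (n + 1)) = ((n + 1 : ℂ))⁻¹ • e n) :
    MinAttains T ∧
      (∀ n : ℕ, ContinuousLinearMap.adjoint T (e n) = ((n + 1 : ℂ))⁻¹ • e (n + 1)) ∧
      mmod (ContinuousLinearMap.adjoint T) = 0 ∧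
      ¬ MinAttains (ContinuousLinearMap.adjoint T) := by
  have he_norm : ∀ n, ‖e n‖ = 1 := fun n => by
    rw [he, lp.norm_single (by norm_num), norm_one]
  simp only [he] at hT0 hTn
  have hadj : ∀ n : ℕ, adjoint T (e n) = ((n + 1 : ℂ))⁻¹ • e (n + 1) := fun n => by
    simp only [he, WeightedShift.adjoint_apply_single hT0 hTn, map_inv₀, map_add, map_natCast,
      map_one]
  have hm : mmod (adjoint T) = 0 := by
    refine mmod_eq_zero_of_tendsto _ he_norm ?_
    simp only [hadj, norm_smul, he_norm, mul_one, norm_inv, ← Nat.cast_add_one,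
      Complex.norm_natCast]
    exact tendsto_inv_atTop_zero.comp (tendsto_natCast_atTop_atTop.comp (tendsto_add_atTop_nat 1))
  refine ⟨minAttains_of_apply_eq_zero T (he_norm 0) (by rw [he, hT0]), hadj, hm,
    not_minAttains_of_injective _
      (WeightedShift.adjoint_injective hTn fun n => inv_ne_zero (Nat.cast_add_one_ne_zero n)) hm⟩
end

section
/- If T is an absolutely minimum attaining bounded operator on a complex Hilbert space H, then either the kernel N(T) or the range R(T) is finite dimensional. -/
/-! Since `T` maps `(ker T)ᗮ` onto its range, if both kernel and range were infinite dimensional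
there would be orthonormal sequences `eₙ` in `ker T` and `fₙ` in `(ker T)ᗮ`. Tilt them into
`gₙ = eₙ + fₙ / (n + 1)` and let `M` be their closed span. Then `‖T gₙ‖ ≤ ‖T‖ / (n + 1)` while
`‖gₙ‖ ≥ 1`, so the minimum modulus of `T` on `M` is `0`. But the relation
`⟪fₙ, y⟫ = ⟪eₙ, y⟫ / (n + 1)`, true on every `gₙ`, holds on all of `M`; a vector of `M ∩ ker T` is
orthogonal to the `fₙ`, hence to the `eₙ`, hence to `M`, so it is `0` and the minimum is not
attained. -/

open ContinuousLinearMap Filter Topology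

open Submodule

section InnerProductSpace

variable {𝕜 E : Type*} [RCLike 𝕜] [NormedAddCommGroup E] [InnerProductSpace 𝕜 E]

theorem exists_orthonormal_nat_of_not_finiteDimensional (h : ¬FiniteDimensional 𝕜 E) :
    ∃ v : ℕ → E, Orthonormal 𝕜 v := by
  let b := Module.Basis.ofVectorSpace 𝕜 E
  have : Infinite (Module.Basis.ofVectorSpaceIndex 𝕜 E) := by
    rw [← not_finite_iff_infinite]
    exact fun _ ↦ h (Module.Finite.of_basis b)
  let ι := Infinite.natEmbedding (Module.Basis.ofVectorSpaceIndex 𝕜 E)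
  exact ⟨InnerProductSpace.gramSchmidtNormed 𝕜 (b ∘ ι),
    InnerProductSpace.gramSchmidtNormed_orthonormal (b.linearIndependent.comp ι ι.injective)⟩

theorem Submodule.exists_orthonormal_nat_of_not_finiteDimensional (K : Submodule 𝕜 E)
    (h : ¬FiniteDimensional 𝕜 K) : ∃ v : ℕ → E, Orthonormal 𝕜 v ∧ ∀ n, v n ∈ K := by
  obtain ⟨v, hv⟩ := _root_.exists_orthonormal_nat_of_not_finiteDimensional h
  exact ⟨fun n ↦ v n, hv.comp_linearIsometry K.subtypeₗᵢ, fun n ↦ (v n).2⟩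

theorem ContinuousLinearMap.range_le_map_orthogonal_ker [CompleteSpace E] {F : Type*}
    [NormedAddCommGroup F] [NormedSpace 𝕜 F] (T : E →L[𝕜] F) :
    LinearMap.range (T : E →ₗ[𝕜] F) ≤ (LinearMap.ker (T : E →ₗ[𝕜] F))ᗮ.map (T : E →ₗ[𝕜] F) := by
  have : CompleteSpace (LinearMap.ker (T : E →ₗ[𝕜] F)) := (isClosed_ker T).completeSpace_coe
  rintro _ ⟨x, rfl⟩
  obtain ⟨y, hy, z, hz, rfl⟩ := (LinearMap.ker (T : E →ₗ[𝕜] F)).exists_add_mem_mem_orthogonal x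
  have hTy : T y = 0 := hy
  exact ⟨z, hz, by simp [hTy]⟩

theorem Orthonormal.eq_zero_of_mem_closure_span_add_smul {ι : Type*} {e f : ι → E}
    (he : Orthonormal 𝕜 e) (hf : Orthonormal 𝕜 f) (hef : ∀ m n, inner 𝕜 (e m) (f n) = 0)
    {c : ι → 𝕜} (hc : ∀ n, c n ≠ 0) {x : E}
    (hx : x ∈ (span 𝕜 (Set.range fun n ↦ e n + c n • f n)).topologicalClosure)
    (hxf : ∀ n, inner 𝕜 (f n) x = 0) : x = 0 := by
  rw [← SetLike.mem_coe, topologicalClosure_coe] at hx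
  have hfe : ∀ m n, inner 𝕜 (f m) (e n) = 0 := fun m n ↦ by
    rw [← inner_conj_symm, hef, map_zero]
  have hrel : ∀ n, inner 𝕜 (f n) x = c n * inner 𝕜 (e n) x := fun n ↦ by
    refine ContinuousLinearMap.eqOn_closure_span (f := innerSL 𝕜 (f n))
      (g := c n • innerSL 𝕜 (e n)) ?_ hx
    rintro _ ⟨m, rfl⟩
    by_cases hnm : n = m
    · subst hnm
      simp [inner_add_right, inner_smul_right, hef, hfe, he.1 n, hf.1 n]
    · simp [inner_add_right, inner_smul_right, hef, hfe, he.inner_eq_zero hnm,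
        hf.inner_eq_zero hnm]
  have hxe : ∀ n, inner 𝕜 x (e n) = 0 := fun n ↦ by
    have := hrel n
    rw [hxf, zero_eq_mul] at this
    rw [← inner_conj_symm, this.resolve_left (hc n), map_zero]
  have hxf' : ∀ n, inner 𝕜 x (f n) = 0 := fun n ↦ by rw [← inner_conj_symm, hxf, map_zero]
  have hxx := ContinuousLinearMap.eqOn_closure_span (f := innerSL 𝕜 x) (g := 0) ?_ hx
  · simpa using hxx
  rintro _ ⟨m, rfl⟩
  simp [inner_add_right, inner_smul_right, hxe, hxf']

end InnerProductSpace

section MinimumModulus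

variable {H H' : Type*} [NormedAddCommGroup H] [InnerProductSpace ℂ H]
  [NormedAddCommGroup H'] [InnerProductSpace ℂ H'] {T : H →L[ℂ] H'} {M : Submodule ℂ H}

theorem mmodOn_nonneg : 0 ≤ mmodOn T M :=
  Real.sInf_nonneg (by rintro _ ⟨x, -, rfl⟩; exact norm_nonneg _)

theorem mmodOn_le_div {x : H} (hxM : x ∈ M) (hx : x ≠ 0) : mmodOn T M ≤ ‖T x‖ / ‖x‖ := by
  have hx' : ‖x‖ ≠ 0 := norm_ne_zero_iff.mpr hx
  have hunit : ‖((‖x‖⁻¹ : ℝ) : ℂ) • x‖ = 1 := by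
    rw [norm_smul, Complex.norm_real, norm_inv, norm_norm, inv_mul_cancel₀ hx']
  have hbdd : BddBelow ((fun y ↦ ‖T y‖) '' {y : H | y ∈ M ∧ ‖y‖ = 1}) :=
    ⟨0, by rintro _ ⟨y, -, rfl⟩; exact norm_nonneg _⟩
  refine (csInf_le hbdd ⟨_, ⟨M.smul_mem _ hxM, hunit⟩, rfl⟩).trans_eq ?_
  simp only [map_smul, norm_smul, Complex.norm_real, norm_inv, norm_norm, inv_mul_eq_div]

theorem AbsMinAttains.mmodOn_pos (hT : AbsMinAttains T) (hMc : IsClosed (M : Set H))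
    (hM : M ≠ ⊥) (hMker : M ⊓ LinearMap.ker (T : H →ₗ[ℂ] H') = ⊥) : 0 < mmodOn T M := by
  refine mmodOn_nonneg.lt_of_ne fun h ↦ ?_
  obtain ⟨x, hxM, hx, hTx⟩ := hT M hM hMc
  have hxker : x ∈ M ⊓ LinearMap.ker (T : H →ₗ[ℂ] H') :=
    ⟨hxM, norm_eq_zero.mp (hTx.trans h.symm)⟩
  rw [hMker, Submodule.mem_bot] at hxker
  simp [hxker] at hx

theorem exists_isClosed_inf_ker_eq_bot_mmodOn_eq_zero [CompleteSpace H] (T : H →L[ℂ] H')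
    (hker : ¬FiniteDimensional ℂ (LinearMap.ker (T : H →ₗ[ℂ] H')))
    (hcoker : ¬FiniteDimensional ℂ (LinearMap.ker (T : H →ₗ[ℂ] H'))ᗮ) :
    ∃ M : Submodule ℂ H, IsClosed (M : Set H) ∧ M ≠ ⊥ ∧
      M ⊓ LinearMap.ker (T : H →ₗ[ℂ] H') = ⊥ ∧ mmodOn T M = 0 := by
  set K := LinearMap.ker (T : H →ₗ[ℂ] H')
  obtain ⟨e, he, heK⟩ := K.exists_orthonormal_nat_of_not_finiteDimensional hker
  obtain ⟨f, hf, hfK⟩ := Kᗮ.exists_orthonormal_nat_of_not_finiteDimensional hcoker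
  have hef : ∀ m n, inner ℂ (e m) (f n) = 0 := fun m n ↦
    K.inner_right_of_mem_orthogonal (heK m) (hfK n)
  set c : ℕ → ℂ := fun n ↦ ((n : ℂ) + 1)⁻¹
  set g : ℕ → H := fun n ↦ e n + c n • f n
  set M := (span ℂ (Set.range g)).topologicalClosure
  have hgM : ∀ n, g n ∈ M := fun n ↦ le_topologicalClosure _ (subset_span ⟨n, rfl⟩)
  have hg : ∀ n, 1 ≤ ‖g n‖ := fun n ↦ by
    have hsq := norm_add_sq_eq_norm_sq_add_norm_sq_of_inner_eq_zero (e n) (c n • f n)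
      (by rw [inner_smul_right, hef, mul_zero])
    nlinarith [he.1 n, norm_nonneg (g n), norm_nonneg (c n • f n)]
  have hg0 : ∀ n, g n ≠ 0 := fun n ↦ norm_ne_zero_iff.mp (zero_lt_one.trans_le (hg n)).ne'
  have hTg : ∀ n, ‖T (g n)‖ ≤ ‖T‖ * ((n : ℝ) + 1)⁻¹ := fun n ↦ by
    have hTe : T (e n) = 0 := heK n
    calc ‖T (g n)‖ = ‖c n‖ * ‖T (f n)‖ := by simp [g, hTe, norm_smul]
      _ ≤ ‖c n‖ * ‖T‖ := by
          gcongr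
          simpa [hf.1 n] using T.le_opNorm (f n)
      _ = ‖T‖ * ((n : ℝ) + 1)⁻¹ := by
          rw [mul_comm, norm_inv]
          norm_cast
  refine ⟨M, isClosed_topologicalClosure _, fun h ↦ hg0 0 (by simpa [h] using hgM 0), ?_,
    le_antisymm ?_ mmodOn_nonneg⟩
  · refine eq_bot_iff.mpr fun x ⟨hxM, hxK⟩ ↦ (Submodule.mem_bot ℂ).mpr <|
      he.eq_zero_of_mem_closure_span_add_smul hf hef
      (fun n ↦ inv_ne_zero (Nat.cast_add_one_ne_zero n)) hxM
      fun n ↦ K.inner_left_of_mem_orthogonal hxK (hfK n)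
  · refine ge_of_tendsto' (by simpa using tendsto_one_div_add_atTop_nhds_zero_nat.const_mul ‖T‖)
      fun n ↦ (mmodOn_le_div (hgM n) (hg0 n)).trans ?_
    exact (div_le_self (norm_nonneg _) (hg n)).trans (hTg n)

end MinimumModulus

theorem stmt18 {H : Type*} [NormedAddCommGroup H] [InnerProductSpace ℂ H]
    [CompleteSpace H] (T : H →L[ℂ] H) (hAM : AbsMinAttains T) :
    FiniteDimensional ℂ (LinearMap.ker (T : H →ₗ[ℂ] H)) ∨ FiniteDimensional ℂ (LinearMap.range (T : H →ₗ[ℂ] H)) := by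
  by_contra! ⟨hker, hran⟩
  have hcoker : ¬FiniteDimensional ℂ (LinearMap.ker (T : H →ₗ[ℂ] H))ᗮ := fun _ ↦
    hran (Submodule.finiteDimensional_of_le T.range_le_map_orthogonal_ker)
  obtain ⟨M, hMc, hM, hMker, hmmod⟩ :=
    exists_isClosed_inf_ker_eq_bot_mmodOn_eq_zero T hker hcoker
  exact (hAM.mmodOn_pos hMc hM hMker).ne' hmmod
end
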